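/- arXiv:1201.0709 — 9 statements merged into one kernel-verified Lean document; each statement's English description precedes it below -/
import Mathlib

section
/- Let n ∈ ℕ and let k_{ij} ≥ 0 be real numbers for 1 ≤ i, j ≤ n. Then the set B := {(x₁, …, xₙ) ∈ ℝⁿ : xᵢ ≥ 0 for all i, and xᵢ² ≤ k_{i1}x₁ + … + k_{in}xₙ for all 1 ≤ i ≤ n} is a bounded subset of ℝⁿ. -/
/-- For nonnegative reals `k i j`, the set
`B = {x ∈ ℝⁿ : xᵢ ≥ 0 and xᵢ² ≤ ∑ⱼ k i j * x j for all i}` is bounded. -/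
theorem stmt_0 (n : ℕ) (k : Fin n → Fin n → ℝ) (hk : ∀ i j, 0 ≤ k i j) :
    Bornology.IsBounded
      {x : EuclideanSpace ℝ (Fin n) |
        (∀ i, 0 ≤ x i) ∧ ∀ i, (x i) ^ 2 ≤ ∑ j, k i j * x j} := by
  set C : ℝ := ∑ i, ∑ j, k i j with hC
  have hC0 : 0 ≤ C := Finset.sum_nonneg fun i _ => Finset.sum_nonneg fun j _ => hk i j
  rw [Metric.isBounded_iff_subset_closedBall 0]
  refine ⟨Real.sqrt n * C, fun x hx => ?_⟩
  obtain ⟨hpos, hineq⟩ := hx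
  -- each coordinate is at most C
  have hcoord : ∀ i, x i ≤ C := by
    intro i
    rcases Finset.exists_max_image Finset.univ x ⟨i, Finset.mem_univ i⟩ with ⟨i₀, -, hmax⟩
    have hle : x i ≤ x i₀ := hmax i (Finset.mem_univ i)
    have h1 : x i₀ ^ 2 ≤ (∑ j, k i₀ j) * x i₀ := by
      calc x i₀ ^ 2 ≤ ∑ j, k i₀ j * x j := hineq i₀
        _ ≤ ∑ j, k i₀ j * x i₀ :=
          Finset.sum_le_sum fun j _ => mul_le_mul_of_nonneg_left (hmax j (Finset.mem_univ j)) (hk i₀ j)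
        _ = (∑ j, k i₀ j) * x i₀ := by rw [Finset.sum_mul]
    have hKC : (∑ j, k i₀ j) ≤ C := by
      refine Finset.single_le_sum (f := fun i => ∑ j, k i j) (fun i _ => Finset.sum_nonneg fun j _ => hk i j) (Finset.mem_univ i₀)
    have hiC : x i₀ ≤ C := by
      rcases eq_or_lt_of_le (hpos i₀) with h0 | h0
      · linarith
      · have : x i₀ * x i₀ ≤ C * x i₀ := by
          calc x i₀ * x i₀ = x i₀ ^ 2 := (sq (x i₀)).symm
            _ ≤ (∑ j, k i₀ j) * x i₀ := h1
            _ ≤ C * x i₀ := mul_le_mul_of_nonneg_right hKC (le_of_lt h0)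
        exact le_of_mul_le_mul_right this h0
    linarith
  -- bound the norm
  rw [mem_closedBall_zero_iff]
  have hnorm : ‖x‖ ≤ Real.sqrt (n * C ^ 2) := by
    rw [EuclideanSpace.norm_eq]
    apply Real.sqrt_le_sqrt
    calc ∑ i, ‖x i‖ ^ 2 ≤ ∑ _i : Fin n, C ^ 2 := by
          refine Finset.sum_le_sum fun i _ => ?_
          rw [Real.norm_eq_abs, sq_abs]
          exact pow_le_pow_left₀ (hpos i) (hcoord i) 2
      _ = n * C ^ 2 := by simp [Finset.sum_const, nsmul_eq_mul]
  calc ‖x‖ ≤ Real.sqrt (n * C ^ 2) := hnorm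
    _ = Real.sqrt n * C := by
        rw [Real.sqrt_mul (Nat.cast_nonneg n), Real.sqrt_sq hC0]
end

section
/- Let A be a *-algebra over ℂ and suppose b₁, …, bₙ ∈ A satisfy relations star(bᵢ) * bᵢ = λ_{i1}·b₁ + … + λ_{in}·bₙ for all 1 ≤ i ≤ n, where λ_{ij} ∈ ℂ. Then for every complex inner product space V and every pre-*-representation π of A on V, each operator π(bᵢ) is bounded: there exists C ≥ 0 with ‖π(bᵢ)ξ‖ ≤ C‖ξ‖ for all ξ ∈ V. -/
/-!
For `ξ ∈ V` the relations give `‖π bᵢ ξ‖² = ⟪ξ, π (star bᵢ * bᵢ) ξ⟫ = ∑ⱼ λᵢⱼ ⟪ξ, π bⱼ ξ⟫`,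
hence `‖π bᵢ ξ‖² ≤ ‖ξ‖ ∑ⱼ |λᵢⱼ| ‖π bⱼ ξ‖`. At an index `m` where `‖π bₘ ξ‖` is largest,
this quadratic inequality bounds `‖π bₘ ξ‖`, and with it every `‖π bᵢ ξ‖`, linearly by `‖ξ‖`.
-/

open Finset

lemma le_sum_sum_mul_of_sq_le_sum_mul {ι : Type*} [Fintype ι] {x : ι → ℝ} {c : ι → ι → ℝ}
    {r : ℝ} (hx : ∀ i, 0 ≤ x i) (hc : ∀ k j, 0 ≤ c k j) (hr : 0 ≤ r)
    (h : ∀ k, x k ^ 2 ≤ (∑ j, c k j * x j) * r) (i : ι) :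
    x i ≤ (∑ k, ∑ j, c k j) * r := by
  obtain ⟨m, -, hm⟩ := exists_max_image univ x ⟨i, mem_univ i⟩
  have hmax : ∀ j, x j ≤ x m := fun j => hm j (mem_univ j)
  have hrow : ∑ j, c m j * x j ≤ (∑ k, ∑ j, c k j) * x m :=
    calc ∑ j, c m j * x j
        ≤ ∑ j, c m j * x m := sum_le_sum fun j _ => mul_le_mul_of_nonneg_left (hmax j) (hc m j)
      _ = (∑ j, c m j) * x m := (sum_mul ..).symm
      _ ≤ (∑ k, ∑ j, c k j) * x m :=
          mul_le_mul_of_nonneg_right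
            (single_le_sum (f := fun k => ∑ j, c k j)
              (fun k _ => sum_nonneg fun j _ => hc k j) (mem_univ m)) (hx m)
  have hsq : x m * x m ≤ x m * ((∑ k, ∑ j, c k j) * r) := by
    rw [← sq]
    linarith [h m, mul_le_mul_of_nonneg_right hrow hr]
  have hm_le : x m ≤ (∑ k, ∑ j, c k j) * r := by
    rcases (hx m).eq_or_lt with hm0 | hm0
    · rw [← hm0]
      exact mul_nonneg (sum_nonneg fun k _ => sum_nonneg fun j _ => hc k j) hr
    · exact le_of_mul_le_mul_left hsq hm0
  exact (hmax i).trans hm_le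

section PreStarRepresentation

variable {A V : Type*} [Ring A] [Algebra ℂ A]
  [NormedAddCommGroup V] [InnerProductSpace ℂ V] (π : A →ₗ[ℂ] (V →ₗ[ℂ] V))

lemma norm_apply_sq_eq_norm_inner_star_mul_self [StarRing A]
    (hmul : ∀ x y : A, π (x * y) = π x ∘ₗ π y)
    (hadj : ∀ (x : A) (ξ η : V), (inner ℂ (π x ξ) η : ℂ) = inner ℂ ξ (π (star x) η))
    (x : A) (ξ : V) :
    ‖π x ξ‖ ^ 2 = ‖(inner ℂ ξ (π (star x * x) ξ) : ℂ)‖ := by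
  rw [hmul, LinearMap.comp_apply, ← hadj, inner_self_eq_norm_sq_to_K]
  simp

lemma norm_inner_apply_sum_smul_le {ι : Type*} [Fintype ι] (c : ι → ℂ) (a : ι → A) (ξ : V) :
    ‖(inner ℂ ξ (π (∑ j, c j • a j) ξ) : ℂ)‖ ≤ (∑ j, ‖c j‖ * ‖π (a j) ξ‖) * ‖ξ‖ := by
  simp only [map_sum, map_smul, LinearMap.sum_apply, LinearMap.smul_apply, inner_sum,
    inner_smul_right, sum_mul]
  refine (norm_sum_le _ _).trans (sum_le_sum fun j _ => ?_)
  rw [norm_mul, mul_assoc, mul_comm ‖π (a j) ξ‖]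
  exact mul_le_mul_of_nonneg_left (norm_inner_le_norm _ _) (norm_nonneg _)

end PreStarRepresentation

theorem stmt_1_general {A : Type*} [Ring A] [Algebra ℂ A] [StarRing A]
    (n : ℕ) (b : Fin n → A) (lam : Fin n → Fin n → ℂ)
    (hrel : ∀ i, star (b i) * b i = ∑ j, lam i j • b j)
    {V : Type*} [NormedAddCommGroup V] [InnerProductSpace ℂ V]
    (π : A →ₗ[ℂ] (V →ₗ[ℂ] V))
    (hmul : ∀ x y : A, π (x * y) = π x ∘ₗ π y)
    (hadj : ∀ (x : A) (ξ η : V), (inner ℂ (π x ξ) η : ℂ) = inner ℂ ξ (π (star x) η)) :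
    ∀ i, ∃ C : ℝ, 0 ≤ C ∧ ∀ ξ : V, ‖π (b i) ξ‖ ≤ C * ‖ξ‖ := by
  intro i
  refine ⟨∑ k, ∑ j, ‖lam k j‖, sum_nonneg fun k _ => sum_nonneg fun j _ => norm_nonneg _,
    fun ξ => ?_⟩
  have hsq : ∀ k, ‖π (b k) ξ‖ ^ 2 ≤ (∑ j, ‖lam k j‖ * ‖π (b j) ξ‖) * ‖ξ‖ := fun k => by
    rw [norm_apply_sq_eq_norm_inner_star_mul_self π hmul hadj, hrel]
    exact norm_inner_apply_sum_smul_le π (lam k) b ξ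
  exact le_sum_sum_mul_of_sq_le_sum_mul (fun _ => norm_nonneg _) (fun _ _ => norm_nonneg _)
    (norm_nonneg ξ) hsq i

/-- If elements `b₁, …, bₙ` of a complex *-algebra satisfy
`star bᵢ * bᵢ = ∑ⱼ λᵢⱼ • bⱼ`, then in every pre-*-representation `π` on a complex
inner product space each operator `π (bᵢ)` is bounded. -/
theorem stmt_1 {A : Type*} [Ring A] [Algebra ℂ A] [StarRing A] [StarModule ℂ A]
    (n : ℕ) (b : Fin n → A) (lam : Fin n → Fin n → ℂ)
    (hrel : ∀ i, star (b i) * b i = ∑ j, lam i j • b j)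
    {V : Type*} [NormedAddCommGroup V] [InnerProductSpace ℂ V]
    (π : A →ₗ[ℂ] (V →ₗ[ℂ] V))
    (hmul : ∀ x y : A, π (x * y) = π x ∘ₗ π y)
    (hadj : ∀ (x : A) (ξ η : V), (inner ℂ (π x ξ) η : ℂ) = inner ℂ ξ (π (star x) η)) :
    ∀ i, ∃ C : ℝ, 0 ≤ C ∧ ∀ ξ : V, ‖π (b i) ξ‖ ≤ C * ‖ξ‖ :=
  stmt_1_general n b lam hrel π hmul hadj
end

section
/- Let n ∈ ℕ and let A = [a_{ij}] be a real n × n matrix with a_{ii} > 0 for all i and a_{ij} ≤ 0 for all i ≠ j. If there exist vectors z = (z₁, …, zₙ) and d = (d₁, …, dₙ) with all entries strictly positive such that A z = d, then A is non-singular (its determinant is nonzero). -/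
/-- Auxiliary: a kernel vector whose ratio with `z` is maximized at a
coordinate where it's positive leads to a contradiction. -/
lemma stmt_5_aux (n : ℕ) (A : Matrix (Fin n) (Fin n) ℝ)
    (hoff : ∀ i j, i ≠ j → A i j ≤ 0)
    (z d : Fin n → ℝ) (hz : ∀ i, 0 < z i) (hd : ∀ i, 0 < d i)
    (hAz : A.mulVec z = d)
    (w : Fin n → ℝ) (hAw : A.mulVec w = 0) (i : Fin n) (hwi : 0 < w i)
    (hmax : ∀ j, w j / z j ≤ w i / z i) : False := by
  set c : ℝ := w i / z i with hc
  have hcpos : 0 < c := div_pos hwi (hz i)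
  have hle : ∀ j, w j ≤ c * z j := by
    intro j
    have := hmax j
    rwa [div_le_iff₀ (hz j)] at this
  have h1 : ∑ j, A i j * w j = 0 := by
    have := congrFun hAw i
    simpa [Matrix.mulVec, dotProduct] using this
  have h2 : ∑ j, A i j * z j = d i := by
    have := congrFun hAz i
    simpa [Matrix.mulVec, dotProduct] using this
  have key : ∑ j, A i j * (c * z j - w j) = c * d i := by
    have heq : ∀ j ∈ Finset.univ, A i j * (c * z j - w j)
        = c * (A i j * z j) - A i j * w j := fun j _ => by ring
    rw [Finset.sum_congr rfl heq, Finset.sum_sub_distrib, ← Finset.mul_sum, h1, h2, sub_zero]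
  have hnonpos : ∑ j, A i j * (c * z j - w j) ≤ 0 := by
    apply Finset.sum_nonpos
    intro j _
    by_cases hij : j = i
    · subst hij
      have : c * z j = w j := div_mul_cancel₀ (w j) (ne_of_gt (hz j))
      simp [this]
    · exact mul_nonpos_of_nonpos_of_nonneg (hoff i j (Ne.symm hij))
        (by linarith [hle j])
  have : 0 < c * d i := mul_pos hcpos (hd i)
  linarith

/-- A real square matrix with positive diagonal and nonpositive
off-diagonal entries which maps some strictly positive vector to a strictly positive
vector is non-singular. -/
theorem stmt_5 (n : ℕ) (A : Matrix (Fin n) (Fin n) ℝ)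
    (hdiag : ∀ i, 0 < A i i) (hoff : ∀ i j, i ≠ j → A i j ≤ 0)
    (z d : Fin n → ℝ) (hz : ∀ i, 0 < z i) (hd : ∀ i, 0 < d i)
    (hAz : A.mulVec z = d) :
    A.det ≠ 0 := by
  intro hdet
  obtain ⟨v, hv0, hAv⟩ := Matrix.exists_mulVec_eq_zero_iff.2 hdet
  rcases Nat.eq_zero_or_pos n with hn | hn
  · subst hn; exact hv0 (Subsingleton.elim v 0)
  obtain ⟨i, -, hi⟩ := Finset.exists_max_image Finset.univ
    (fun j => |v j| / z j) ⟨⟨0, hn⟩, Finset.mem_univ _⟩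
  have hvi : 0 < |v i| := by
    obtain ⟨j, hj⟩ : ∃ j, v j ≠ 0 := by
      by_contra h
      push_neg at h
      exact hv0 (funext h)
    have h1 : 0 < |v j| / z j := div_pos (abs_pos.2 hj) (hz j)
    have h2 : (0:ℝ) < |v i| / z i := lt_of_lt_of_le h1 (hi j (Finset.mem_univ j))
    by_contra h
    push_neg at h
    have h0 : |v i| = 0 := le_antisymm h (abs_nonneg _)
    rw [h0, zero_div] at h2
    exact lt_irrefl _ h2
  rcases le_or_gt 0 (v i) with hsign | hsign
  · refine stmt_5_aux n A hoff z d hz hd hAz v hAv i ?_ ?_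
    · rwa [abs_of_nonneg hsign] at hvi
    · intro j
      have := hi j (Finset.mem_univ j)
      calc v j / z j ≤ |v j| / z j := (div_le_div_iff_of_pos_right (hz j)).2 (le_abs_self _)
          _ ≤ |v i| / z i := this
          _ = v i / z i := by rw [abs_of_nonneg hsign]
  · refine stmt_5_aux n A hoff z d hz hd hAz (-v) (by rw [Matrix.mulVec_neg, hAv, neg_zero]) i ?_ ?_
    · simpa [abs_of_neg hsign] using hvi
    · intro j
      have := hi j (Finset.mem_univ j)
      calc (-v) j / z j ≤ |v j| / z j := (div_le_div_iff_of_pos_right (hz j)).2 (by simpa using neg_le_abs (v j))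
          _ ≤ |v i| / z i := this
          _ = (-v) i / z i := by
            show |v i| / z i = -v i / z i
            rw [abs_of_neg hsign]
end

section
/- Let n ∈ ℕ and let A = [a_{ij}] be a real n × n matrix with a_{ii} > 0 for all i and a_{ij} ≤ 0 for all i ≠ j. Assume there exist vectors z = (z₁, …, zₙ) and d = (d₁, …, dₙ) with all entries strictly positive such that A z = d. Then for every y ∈ ℝⁿ, if every entry of A y is ≥ 0, then every entry of y is ≥ 0. -/
/-- Under the hypotheses of Statement 5, if `A y ≥ 0` entrywise then
`y ≥ 0` entrywise. -/
theorem stmt_6 (n : ℕ) (A : Matrix (Fin n) (Fin n) ℝ)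
    (hdiag : ∀ i, 0 < A i i) (hoff : ∀ i j, i ≠ j → A i j ≤ 0)
    (z d : Fin n → ℝ) (hz : ∀ i, 0 < z i) (hd : ∀ i, 0 < d i)
    (hAz : A.mulVec z = d)
    (y : Fin n → ℝ) (hy : ∀ i, 0 ≤ A.mulVec y i) :
    ∀ i, 0 ≤ y i := by
  by_contra h
  push_neg at h
  obtain ⟨i0, hi0⟩ := h
  obtain ⟨k, -, hk⟩ := Finset.exists_min_image (Finset.univ : Finset (Fin n))
    (fun j => y j / z j) ⟨i0, Finset.mem_univ i0⟩
  set m : ℝ := y k / z k with hm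
  have hmneg : m < 0 := lt_of_le_of_lt (hk i0 (Finset.mem_univ i0))
    (div_neg_of_neg_of_pos hi0 (hz i0))
  have hx : ∀ j, m * z j ≤ y j := by
    intro j
    have := hk j (Finset.mem_univ j)
    calc m * z j ≤ (y j / z j) * z j := by
          exact mul_le_mul_of_nonneg_right this (hz j).le
      _ = y j := div_mul_cancel₀ _ (hz j).ne'
  have hxk : y k - m * z k = 0 := by
    have : m * z k = y k := div_mul_cancel₀ _ (hz k).ne'
    linarith
  set x : Fin n → ℝ := fun j => y j - m * z j with hxdef
  have hAx : A.mulVec x k = A.mulVec y k - m * d k := by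
    have : x = y - m • z := by funext j; simp [hxdef, sub_eq_add_neg, smul_eq_mul]
    rw [this, Matrix.mulVec_sub, Matrix.mulVec_smul, hAz]
    simp [smul_eq_mul]
  have hpos : 0 < A.mulVec x k := by
    rw [hAx]
    have := hy k
    nlinarith [hd k]
  have hnonpos : A.mulVec x k ≤ 0 := by
    rw [Matrix.mulVec, dotProduct]
    apply Finset.sum_nonpos
    intro j _
    rcases eq_or_ne j k with rfl | hjk
    · simp [hxdef, hxk]
    · exact mul_nonpos_of_nonpos_of_nonneg (hoff k j (Ne.symm hjk))
        (by simpa [hxdef] using sub_nonneg.mpr (hx j))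
  linarith
end

section
/- Let n ∈ ℕ and let λ_{ij} ≥ 0 be real numbers for 1 ≤ i, j ≤ n. Suppose z = (z₁, …, zₙ) has all entries strictly positive and satisfies zᵢ² = λ_{i1}z₁ + … + λ_{in}zₙ for all i. Then every vector y = (y₁, …, yₙ) with all entries ≥ 0 satisfying yᵢ² ≤ λ_{i1}y₁ + … + λ_{in}yₙ for all i has yᵢ ≤ zᵢ for every 1 ≤ i ≤ n. -/
/-! Let `t = maxⱼ yⱼ / zⱼ`, attained at `i₀`, so that `y ≤ t • z` with equality at `i₀`.
If `t > 1`, evaluating the two inequalities at `i₀` and using `λ ≥ 0` gives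
`t² zᵢ₀² = yᵢ₀² ≤ ∑ⱼ λᵢ₀ⱼ yⱼ ≤ t ∑ⱼ λᵢ₀ⱼ zⱼ ≤ t zᵢ₀²`, i.e. `t² ≤ t`, a contradiction. -/

open Finset

variable {ι : Type*} [Fintype ι]

lemma exists_le_mul_of_pos [Nonempty ι] {y z : ι → ℝ} (hz : ∀ i, 0 < z i) :
    ∃ t i₀, y i₀ = t * z i₀ ∧ ∀ j, y j ≤ t * z j := by
  obtain ⟨i₀, hmax⟩ := Finite.exists_max fun j => y j / z j
  refine ⟨y i₀ / z i₀, i₀, (div_mul_cancel₀ _ (hz i₀).ne').symm, fun j => ?_⟩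
  exact (div_le_iff₀ (hz j)).mp (hmax j)

theorem le_of_sq_le_sum_mul {lam : ι → ι → ℝ} (hlam : ∀ i j, 0 ≤ lam i j)
    {y z : ι → ℝ} (hz : ∀ i, 0 < z i) (hsuper : ∀ i, ∑ j, lam i j * z j ≤ z i ^ 2)
    (hsub : ∀ i, y i ^ 2 ≤ ∑ j, lam i j * y j) : y ≤ z := by
  intro i
  have : Nonempty ι := ⟨i⟩
  obtain ⟨t, i₀, hyt, hle⟩ := exists_le_mul_of_pos (y := y) hz
  suffices ht : t ≤ 1 by
    calc y i ≤ t * z i := hle i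
      _ ≤ z i := mul_le_of_le_one_left (hz i).le ht
  by_contra! ht
  have hsq : t ^ 2 * z i₀ ^ 2 ≤ t * z i₀ ^ 2 :=
    calc t ^ 2 * z i₀ ^ 2 = y i₀ ^ 2 := by rw [hyt]; ring
      _ ≤ ∑ j, lam i₀ j * y j := hsub i₀
      _ ≤ ∑ j, lam i₀ j * (t * z j) :=
        sum_le_sum fun j _ => mul_le_mul_of_nonneg_left (hle j) (hlam i₀ j)
      _ = t * ∑ j, lam i₀ j * z j := by rw [mul_sum]; exact sum_congr rfl fun j _ => by ring
      _ ≤ t * z i₀ ^ 2 := mul_le_mul_of_nonneg_left (hsuper i₀) (by linarith)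
  have hgap : 0 < (t ^ 2 - t) * z i₀ ^ 2 := mul_pos (by nlinarith) (pow_pos (hz i₀) 2)
  linarith

theorem stmt_7_general (n : ℕ) (lam : Fin n → Fin n → ℝ) (hlam : ∀ i j, 0 ≤ lam i j)
    (z : Fin n → ℝ) (hz : ∀ i, 0 < z i)
    (hzeq : ∀ i, (z i) ^ 2 = ∑ j, lam i j * z j)
    (y : Fin n → ℝ)
    (hyineq : ∀ i, (y i) ^ 2 ≤ ∑ j, lam i j * y j) :
    ∀ i, y i ≤ z i :=
  le_of_sq_le_sum_mul hlam hz (fun i => (hzeq i).ge) hyineq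

/-- If `z > 0` solves `zᵢ² = ∑ⱼ λᵢⱼ zⱼ` with all `λᵢⱼ ≥ 0`, then any
`y ≥ 0` with `yᵢ² ≤ ∑ⱼ λᵢⱼ yⱼ` satisfies `y ≤ z` entrywise. -/
theorem stmt_7 (n : ℕ) (lam : Fin n → Fin n → ℝ) (hlam : ∀ i j, 0 ≤ lam i j)
    (z : Fin n → ℝ) (hz : ∀ i, 0 < z i)
    (hzeq : ∀ i, (z i) ^ 2 = ∑ j, lam i j * z j)
    (y : Fin n → ℝ) (hy : ∀ i, 0 ≤ y i)
    (hyineq : ∀ i, (y i) ^ 2 ≤ ∑ j, lam i j * y j) :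
    ∀ i, y i ≤ z i :=
  stmt_7_general n lam hlam z hz hzeq y hyineq
end

section
/- Let G be a group, Γ ⊆ G a subgroup and g ∈ G. Let (xₙ)_{n ≥ 0} be a sequence in G such that Γx₀Γ = ΓgΓ and, for every n ≥ 0, there exists γ ∈ Γ with Γx_{n+1}Γ = Γ(xₙ⁻¹ γ xₙ)Γ. Then there exists a sequence (γₙ)_{n ≥ 1} of elements of Γ such that for all n ≥ 1, ΓxₙΓ = Γ[g, γ₁, …, γₙ]Γ. -/
/-!
Write `x ~ y` when `ΓxΓ = ΓyΓ`, i.e. `x = a y b` with `a, b ∈ Γ`. If `x ~ c`, say `x = a c b`, and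
`γ ∈ Γ`, then `x⁻¹γx = b⁻¹ (c⁻¹ ε c) b` with `ε = a⁻¹γa ∈ Γ`, while `[c, ε⁻¹] = (c⁻¹ ε c) ε⁻¹`;
hence `x⁻¹γx ~ [c, ε⁻¹]`. So `xₙ ~ [g, γ₁, …, γₙ]` propagates from `n` to `n + 1`, and the `γₙ`
are chosen one at a time along the recursion defining the iterated commutator.
-/

open Pointwise

/-- The commutator `[s,t] = s⁻¹t⁻¹st`. -/
def pcomm {G : Type*} [Group G] (s t : G) : G := s⁻¹ * t⁻¹ * s * t

/-- The iterated commutator `[g, γ₁, …, γₙ]`, defined by `[g] = g` and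
`[g, γ₁, …, γₙ₊₁] = [[g, γ₁, …, γₙ], γₙ₊₁]`. -/
def itComm {G : Type*} [Group G] (g : G) (γ : ℕ → G) : ℕ → G
  | 0 => g
  | n + 1 => pcomm (itComm g γ n) (γ (n + 1))

open DoubleCoset

section

variable {G : Type*} [Group G]

theorem doubleCoset_mul_mul_eq {H K : Subgroup G} {a b : G} (ha : a ∈ H) (hb : b ∈ K) (x : G) :
    doubleCoset (a * x * b) H K = doubleCoset x H K :=
  doubleCoset_eq_of_mem (mem_doubleCoset.2 ⟨a, ha, b, hb, rfl⟩)

theorem exists_eq_mul_mul_of_doubleCoset_eq {H K : Subgroup G} {x y : G}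
    (h : doubleCoset x H K = doubleCoset y H K) : ∃ a ∈ H, ∃ b ∈ K, x = a * y * b :=
  mem_doubleCoset.1 (h ▸ mem_doubleCoset_self H K x)

theorem doubleCoset_pcomm_eq {Γ : Subgroup G} (c : G) {δ : G} (hδ : δ ∈ Γ) :
    doubleCoset (pcomm c δ) Γ Γ = doubleCoset (c⁻¹ * δ⁻¹ * c) Γ Γ := by
  rw [← doubleCoset_mul_mul_eq Γ.one_mem hδ (c⁻¹ * δ⁻¹ * c), one_mul]
  rfl

theorem exists_doubleCoset_conj_eq_pcomm {Γ : Subgroup G} {x c γ : G}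
    (hxc : doubleCoset x Γ Γ = doubleCoset c Γ Γ) (hγ : γ ∈ Γ) :
    ∃ δ ∈ Γ, doubleCoset (x⁻¹ * γ * x) Γ Γ = doubleCoset (pcomm c δ) Γ Γ := by
  obtain ⟨a, ha, b, hb, rfl⟩ := exists_eq_mul_mul_of_doubleCoset_eq hxc
  have hε : a⁻¹ * γ * a ∈ Γ := Γ.mul_mem (Γ.mul_mem (Γ.inv_mem ha) hγ) ha
  refine ⟨(a⁻¹ * γ * a)⁻¹, Γ.inv_mem hε, ?_⟩
  have hconj : (a * c * b)⁻¹ * γ * (a * c * b) = b⁻¹ * (c⁻¹ * (a⁻¹ * γ * a) * c) * b := by group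
  rw [doubleCoset_pcomm_eq c (Γ.inv_mem hε), inv_inv, hconj,
    doubleCoset_mul_mul_eq (Γ.inv_mem hb) hb]

theorem exists_forall_itComm {Γ : Subgroup G} {Q : ℕ → G → Prop} {g : G} (h0 : Q 0 g)
    (hstep : ∀ n c, Q n c → ∃ δ ∈ Γ, Q (n + 1) (pcomm c δ)) :
    ∃ γs : ℕ → G, (∀ n, γs n ∈ Γ) ∧ ∀ n, Q n (itComm g γs n) := by
  classical
  -- Made unconditional so that `choose` yields `δ` as a function of `n` and `c` alone.
  have hchoice : ∀ n c, ∃ δ ∈ Γ, Q n c → Q (n + 1) (pcomm c δ) := fun n c =>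
    if hc : Q n c then
      (hstep n c hc).imp fun _ ⟨hδ, hQ⟩ => ⟨hδ, fun _ => hQ⟩
    else ⟨1, Γ.one_mem, fun h => absurd h hc⟩
  choose δ hδΓ hδ using hchoice
  let c : ℕ → G := fun n => Nat.rec g (fun n cn => pcomm cn (δ n cn)) n
  have hc : ∀ n, itComm g (fun n => δ (n - 1) (c (n - 1))) n = c n := by
    intro n
    induction n with
    | zero => rfl
    | succ n ih => rw [itComm, ih]; rfl
  -- `itComm` never reads `γs 0`, so the truncated `n - 1` at `n = 0` is harmless.
  refine ⟨fun n => δ (n - 1) (c (n - 1)), fun n => hδΓ _ _, fun n => ?_⟩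
  rw [hc]
  induction n with
  | zero => exact h0
  | succ n ih => exact hδ n (c n) ih

end

/-- If `Γx₀Γ = ΓgΓ` and each `Γxₙ₊₁Γ = Γ(xₙ⁻¹γxₙ)Γ` for some `γ ∈ Γ`,
then there is a sequence `(γₙ) ⊆ Γ` with `ΓxₙΓ = Γ[g, γ₁, …, γₙ]Γ` for all `n ≥ 1`. -/
theorem stmt_10 {G : Type*} [Group G] (Γ : Subgroup G) (g : G) (x : ℕ → G)
    (hx0 : (Γ : Set G) * {x 0} * (Γ : Set G) = (Γ : Set G) * {g} * (Γ : Set G))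
    (hsucc : ∀ n : ℕ, ∃ γ ∈ Γ,
      (Γ : Set G) * {x (n + 1)} * (Γ : Set G) =
        (Γ : Set G) * {(x n)⁻¹ * γ * x n} * (Γ : Set G)) :
    ∃ γs : ℕ → G, (∀ n, γs n ∈ Γ) ∧ ∀ n : ℕ, 1 ≤ n →
      (Γ : Set G) * {x n} * (Γ : Set G) =
        (Γ : Set G) * {itComm g γs n} * (Γ : Set G) := by
  obtain ⟨γs, hγs, hx⟩ := exists_forall_itComm (Γ := Γ)
    (Q := fun n c => doubleCoset (x n) Γ Γ = doubleCoset c Γ Γ) hx0 fun n c hc => by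
      obtain ⟨γ, hγ, hxsucc⟩ := hsucc n
      obtain ⟨δ, hδ, hconj⟩ := exists_doubleCoset_conj_eq_pcomm hc hγ
      exact ⟨δ, hδ, hxsucc.trans hconj⟩
  exact ⟨γs, hγs, fun n _ => hx n⟩
end

section
/- Let (G, Γ) be a Hecke pair and g ∈ G. Define a relation on subsets of G by: D ⇝ E if and only if there exist x ∈ G and γ ∈ Γ with D = ΓxΓ and E = Γ(x⁻¹γx)Γ. Suppose that for every sequence (γₖ)_{k ≥ 1} of elements of Γ, the set of double cosets {Γ[g, γ₁, …, γₙ]Γ : n ≥ 1} is finite. Then the set {E ⊆ G : E is reachable from ΓgΓ by the reflexive-transitive closure of ⇝} is finite. -/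
open Pointwise

/-!
Since `Γ x⁻¹ γ x Γ = Γ [x, γ⁻¹] Γ`, following the successor relation from `ΓgΓ` for `n` steps
produces exactly the double cosets `Γ [g, γ₁, …, γₙ] Γ`. The Hecke condition makes the successor
relation locally finite, so if infinitely many double cosets were reachable, Kőnig's lemma would
give an infinite path without repetitions, i.e. a sequence `(γₖ)` with infinitely many distinct
`Γ [g, γ₁, …, γₙ] Γ`.
-/

open Relation DoubleCoset

theorem exists_seq_of_forall_exists_rel {σ : Type*} {P : σ → Prop} {step : σ → σ → Prop}
    (h : ∀ s, P s → ∃ t, P t ∧ step s t) {s₀ : σ} (h₀ : P s₀) :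
    ∃ f : ℕ → σ, f 0 = s₀ ∧ ∀ n, P (f n) ∧ step (f n) (f (n + 1)) := by
  have not_acc : ∀ s, Acc (fun t s => P t ∧ step s t) s → ¬P s := by
    intro s hacc
    induction hacc with
    | intro s _ ih =>
      intro hs
      obtain ⟨t, ht, hst⟩ := h s hs
      exact ih t ⟨ht, hst⟩ ht
  obtain ⟨f, hf0, hf⟩ := not_acc_iff_exists_descending_chain.1 (not_acc s₀ · h₀)
  refine ⟨f, hf0, fun n => ⟨?_, (hf n).2⟩⟩
  cases n with
  | zero => exact hf0 ▸ h₀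
  | succ n => exact (hf n).1

namespace Relation

variable {α : Type*} {r : α → α → Prop}

def Avoiding (r : α → α → Prop) (V : Set α) (x y : α) : Prop := r x y ∧ y ∉ V

theorem avoiding_avoiding_singleton (V : Set α) (a : α) :
    Avoiding (Avoiding r V) {a} = Avoiding r (insert a V) := by
  ext x y
  simp only [Avoiding, Set.mem_singleton_iff, Set.mem_insert_iff]
  tauto

theorem ReflTransGen.eq_or_avoiding {a b : α} (h : ReflTransGen r a b) :
    b = a ∨ ReflTransGen (Avoiding r {a}) a b := by
  induction h with
  | refl => exact Or.inl rfl
  | @tail b c _ hbc ih =>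
    by_cases hca : c = a
    · exact Or.inl hca
    · refine Or.inr ?_
      rcases ih with rfl | ih
      · exact ReflTransGen.single ⟨hbc, hca⟩
      · exact ih.tail ⟨hbc, hca⟩

theorem infinite_reflTransGen_avoiding_of_infinite {a : α}
    (h : {b | ReflTransGen r a b}.Infinite) :
    {b | ReflTransGen (Avoiding r {a}) a b}.Infinite := by
  refine fun hfin => h ((hfin.insert a).subset fun b hb => ?_)
  rcases ReflTransGen.eq_or_avoiding hb with rfl | hb
  exacts [Set.mem_insert _ _, Set.mem_insert_of_mem _ hb]

theorem exists_rel_infinite_reflTransGen (hr : ∀ x, {y | r x y}.Finite) {a : α}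
    (h : {b | ReflTransGen r a b}.Infinite) :
    ∃ b, r a b ∧ {c | ReflTransGen r b c}.Infinite := by
  by_contra! hfin
  refine h ((((hr a).biUnion hfin).insert a).subset fun c hc => ?_)
  rcases ReflTransGen.cases_head hc with rfl | ⟨b, hab, hbc⟩
  exacts [Set.mem_insert _ _, Set.mem_insert_of_mem _ (Set.mem_biUnion hab hbc)]

theorem exists_injective_path_of_infinite_reflTransGen (hr : ∀ x, {y | r x y}.Finite) {a : α}
    (h : {b | ReflTransGen r a b}.Infinite) :
    ∃ f : ℕ → α, f 0 = a ∧ Function.Injective f ∧ ∀ n, r (f n) (f (n + 1)) := by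
  -- a state is the current vertex together with the set of vertices visited so far
  obtain ⟨s, hs0, hs⟩ := exists_seq_of_forall_exists_rel
    (P := fun s : α × Set α => s.1 ∈ s.2 ∧ {b | ReflTransGen (Avoiding r s.2) s.1 b}.Infinite)
    (step := fun s t => r s.1 t.1 ∧ t.1 ∉ s.2 ∧ t.2 = insert t.1 s.2)
    (fun ⟨x, V⟩ ⟨_, hinf⟩ => by
      obtain ⟨b, ⟨hxb, hbV⟩, hbinf⟩ := exists_rel_infinite_reflTransGen
        (fun y => (hr y).subset fun _ hz => hz.1) hinf
      refine ⟨(b, insert b V), ⟨Set.mem_insert _ _, ?_⟩, hxb, hbV, rfl⟩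
      rw [← avoiding_avoiding_singleton]
      exact infinite_reflTransGen_avoiding_of_infinite hbinf)
    (s₀ := (a, {a})) ⟨rfl, infinite_reflTransGen_avoiding_of_infinite h⟩
  have hmono : Monotone fun n => (s n).2 :=
    monotone_nat_of_le_succ fun n => (hs n).2.2.2 ▸ Set.subset_insert _ _
  refine ⟨fun n => (s n).1, by simp only [hs0], Function.Injective.of_lt_imp_ne fun m n hmn => ?_,
    fun n => (hs n).2.1⟩
  obtain ⟨k, rfl⟩ := Nat.exists_eq_add_one_of_ne_zero (Nat.ne_zero_of_lt hmn)
  exact fun heq => (hs k).2.2.1 (heq ▸ hmono (Nat.le_of_lt_succ hmn) (hs m).1.1)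

end Relation

section DoubleCoset

variable {G : Type*} [Group G]

theorem doubleCoset_mul_right_eq {H K : Subgroup G} {y γ : G} (hγ : γ ∈ K) :
    doubleCoset (y * γ) H K = doubleCoset y H K :=
  doubleCoset_eq_of_mem (mem_doubleCoset.2 ⟨1, H.one_mem, γ, hγ, by rw [one_mul]⟩)

variable (Γ : Subgroup G)

theorem finite_image_of_finite_image_mk {β : Type*} {f : G → β}
    (hf : ∀ y, ∀ γ ∈ Γ, f (y * γ) = f y) {s : Set G}
    (hs : (QuotientGroup.mk '' s : Set (G ⧸ Γ)).Finite) : (f '' s).Finite := by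
  let F : G ⧸ Γ → β := Quotient.lift f fun y z hyz => by
    rw [← mul_inv_cancel_left y z, hf y _ (QuotientGroup.leftRel_apply.1 hyz)]
  rw [show f = F ∘ QuotientGroup.mk from rfl, Set.image_comp]
  exact hs.image F

def HeckeSucc (D E : Set G) : Prop :=
  ∃ x : G, ∃ γ ∈ Γ, D = doubleCoset x Γ Γ ∧ E = doubleCoset (x⁻¹ * γ * x) Γ Γ

variable {Γ}

theorem HeckeSucc.exists_eq_doubleCoset_pcomm {a : G} {E : Set G}
    (h : HeckeSucc Γ (doubleCoset a Γ Γ) E) :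
    ∃ γ ∈ Γ, E = doubleCoset (pcomm a γ) Γ Γ := by
  obtain ⟨x, γ, hγ, hax, rfl⟩ := h
  obtain ⟨p, hp, q, hq, rfl⟩ := mem_doubleCoset.1 (hax ▸ mem_doubleCoset_self Γ Γ a)
  -- with `δ = p γ⁻¹ p⁻¹` one has `[p x q, δ] = q⁻¹ (x⁻¹ γ x) q δ`
  have hδ : p * γ⁻¹ * p⁻¹ ∈ Γ := Γ.mul_mem (Γ.mul_mem hp (Γ.inv_mem hγ)) (Γ.inv_mem hp)
  refine ⟨_, hδ, (doubleCoset_eq_of_mem (mem_doubleCoset.2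
    ⟨q⁻¹, Γ.inv_mem hq, q * (p * γ⁻¹ * p⁻¹), Γ.mul_mem hq hδ, ?_⟩)).symm⟩
  simp only [pcomm]
  group

theorem finite_setOf_heckeSucc
    (hHecke : ∀ x : G, (QuotientGroup.mk '' doubleCoset x Γ Γ : Set (G ⧸ Γ)).Finite)
    (D : Set G) : {E | HeckeSucc Γ D E}.Finite := by
  rcases Set.eq_empty_or_nonempty {E | HeckeSucc Γ D E} with hempty | ⟨_, x, _, _, rfl, _⟩
  · exact hempty ▸ Set.finite_empty
  -- `[x, γ] = x⁻¹ (γ⁻¹ x γ)` with `γ⁻¹ x γ ∈ ΓxΓ`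
  refine (finite_image_of_finite_image_mk Γ (f := fun y => doubleCoset (x⁻¹ * y) Γ Γ)
    (fun y γ hγ => by rw [← mul_assoc, doubleCoset_mul_right_eq hγ]) (hHecke x)).subset ?_
  intro E hE
  obtain ⟨γ, hγ, rfl⟩ := hE.exists_eq_doubleCoset_pcomm
  refine ⟨γ⁻¹ * x * γ, mem_doubleCoset.2 ⟨γ⁻¹, Γ.inv_mem hγ, γ, hγ, rfl⟩, ?_⟩
  simp only [pcomm, mul_assoc]

theorem exists_itComm_of_heckeSucc_path {g : G} {f : ℕ → Set G} (hf0 : f 0 = doubleCoset g Γ Γ)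
    (hf : ∀ n, HeckeSucc Γ (f n) (f (n + 1))) :
    ∃ γs : ℕ → G, (∀ k, γs k ∈ Γ) ∧ ∀ n, f n = doubleCoset (itComm g γs n) Γ Γ := by
  have hnext : ∀ n a, f n = doubleCoset a Γ Γ →
      ∃ γ, γ ∈ Γ ∧ f (n + 1) = doubleCoset (pcomm a γ) Γ Γ := fun n a ha =>
    (ha ▸ hf n).exists_eq_doubleCoset_pcomm
  choose! next hnextΓ hnext using hnext
  let rep : ℕ → G := fun n => Nat.rec g (fun m a => pcomm a (next m a)) n
  have hrep : ∀ n, f n = doubleCoset (rep n) Γ Γ := fun n => by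
    induction n with
    | zero => exact hf0
    | succ n ih => exact hnext n _ ih
  -- `γs 0` plays no role in `itComm`; truncated subtraction makes it `next 0 g`
  refine ⟨fun n => next (n - 1) (rep (n - 1)), fun k => hnextΓ _ _ (hrep _), fun n => ?_⟩
  suffices itComm g (fun n => next (n - 1) (rep (n - 1))) n = rep n from this ▸ hrep n
  induction n with
  | zero => rfl
  | succ n ih => simp only [itComm, ih, Nat.add_sub_cancel]; rfl

end DoubleCoset

/-- For a Hecke pair `(G, Γ)` and `g ∈ G`, if for every sequence
`(γₖ) ⊆ Γ` the set of double cosets `{Γ[g, γ₁, …, γₙ]Γ : n ≥ 1}` is finite, then the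
set of double cosets reachable from `ΓgΓ` by the successor relation is finite. -/
theorem stmt_11 {G : Type*} [Group G] (Γ : Subgroup G)
    (hHecke : ∀ x : G,
      ((QuotientGroup.mk '' ((Γ : Set G) * {x} * (Γ : Set G))) : Set (G ⧸ Γ)).Finite)
    (g : G)
    (hfin : ∀ γs : ℕ → G, (∀ k, γs k ∈ Γ) →
      {E : Set G | ∃ n : ℕ, 1 ≤ n ∧
        E = (Γ : Set G) * {itComm g γs n} * (Γ : Set G)}.Finite) :
    {E : Set G | Relation.ReflTransGen
      (fun D E : Set G => ∃ x : G, ∃ γ ∈ Γ,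
        D = (Γ : Set G) * {x} * (Γ : Set G) ∧
        E = (Γ : Set G) * {x⁻¹ * γ * x} * (Γ : Set G))
      ((Γ : Set G) * {g} * (Γ : Set G)) E}.Finite := by
  by_contra hinf
  obtain ⟨f, hf0, hinj, hstep⟩ := exists_injective_path_of_infinite_reflTransGen
    (r := HeckeSucc Γ) (finite_setOf_heckeSucc hHecke) hinf
  obtain ⟨γs, hγs, hf⟩ := exists_itComm_of_heckeSucc_path hf0 hstep
  refine Set.infinite_of_injective_forall_mem (hinj.comp Nat.succ_injective) (fun n => ?_)
    (hfin γs hγs)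
  exact ⟨n + 1, Nat.le_add_left 1 n, hf (n + 1)⟩
end

section
/- Let G be an FC-group, i.e. a group in which every element has a finite conjugacy class. Then every subgroup Γ of G is a Hecke subgroup: for every g ∈ G, the double coset ΓgΓ is contained in a finite union of left cosets of Γ; equivalently, the image of ΓgΓ under the quotient map G → G/Γ is finite. -/
open Pointwise

/-- Every left coset `a g b Γ` in `ΓgΓ` is the coset `(a g a⁻¹) Γ` of a conjugate of `g`. -/
theorem QuotientGroup.mk_image_doubleCoset_subset_image_conj {G : Type*} [Group G]
    (Γ : Subgroup G) (g : G) :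
    (QuotientGroup.mk '' ((Γ : Set G) * {g} * (Γ : Set G)) : Set (G ⧸ Γ)) ⊆
      QuotientGroup.mk '' {x : G | ∃ t : G, x = t⁻¹ * g * t} := by
  rintro _ ⟨_, ⟨_, ⟨a, ha, x, hx, rfl⟩, b, hb, rfl⟩, rfl⟩
  rw [Set.mem_singleton_iff.mp hx]
  refine ⟨a * g * a⁻¹, ⟨a⁻¹, by group⟩, ?_⟩
  exact (mk_mul_of_mem _ (Γ.inv_mem ha)).trans (mk_mul_of_mem _ hb).symm

/-- In an FC-group (every conjugacy class is finite), every subgroup `Γ`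
is a Hecke subgroup: the image of each double coset `ΓgΓ` in `G/Γ` is finite. -/
theorem stmt_15 {G : Type*} [Group G]
    (hFC : ∀ s : G, {x : G | ∃ t : G, x = t⁻¹ * s * t}.Finite)
    (Γ : Subgroup G) (g : G) :
    ((QuotientGroup.mk '' ((Γ : Set G) * {g} * (Γ : Set G))) : Set (G ⧸ Γ)).Finite :=
  ((hFC g).image _).subset (QuotientGroup.mk_image_doubleCoset_subset_image_conj Γ g)
end

section
/- Let G be a group and Γ a protonormal subgroup of G, meaning that Γs⁻¹Γs = s⁻¹ΓsΓ as subsets of G for every s ∈ G. Then for every g ∈ G and every γ₁, γ₂ ∈ Γ, there exists ω ∈ Γ such that Γ[g, γ₁, γ₂]Γ = Γ(g⁻¹ωγ₁⁻¹g)Γ as subsets of G. -/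
open Pointwise

/-!
Write `y = γ₂⁻¹ · g⁻¹γ₁⁻¹g ∈ Γ · g⁻¹Γg`. Protonormality moves the conjugate to the left:
`y = g⁻¹ωg · δ` with `ω, δ ∈ Γ`. Expanding the double commutator,
`[g, γ₁, γ₂] = γ₁⁻¹ · g⁻¹γ₁g · y · γ₁γ₂ = γ₁⁻¹ · g⁻¹(γ₁ωγ₁)γ₁⁻¹g · δγ₁γ₂`,
and the outer factors `γ₁⁻¹` and `δγ₁γ₂` are absorbed by `Γ`.
-/

theorem Subgroup.doubleCoset_mul_mul {G : Type*} [Group G] (Γ : Subgroup G) {a b : G}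
    (x : G) (ha : a ∈ Γ) (hb : b ∈ Γ) :
    (Γ : Set G) * {a * x * b} * (Γ : Set G) = (Γ : Set G) * {x} * (Γ : Set G) :=
  DoubleCoset.doubleCoset_eq_of_mem (DoubleCoset.mem_doubleCoset.2 ⟨a, ha, b, hb, rfl⟩)

theorem Subgroup.exists_mul_conj_eq_conj_mul {G : Type*} [Group G] (Γ : Subgroup G) {s : G}
    (hs : (Γ : Set G) * ({s⁻¹} * (Γ : Set G) * {s}) =
      ({s⁻¹} * (Γ : Set G) * {s}) * (Γ : Set G))
    {γ δ : G} (hγ : γ ∈ Γ) (hδ : δ ∈ Γ) :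
    ∃ ω ∈ Γ, ∃ δ' ∈ Γ, γ * (s⁻¹ * δ * s) = s⁻¹ * ω * s * δ' := by
  have hmem : γ * (s⁻¹ * δ * s) ∈ ({s⁻¹} * (Γ : Set G) * {s}) * (Γ : Set G) :=
    hs ▸ Set.mul_mem_mul hγ (Set.mul_mem_mul (Set.mul_mem_mul rfl hδ) rfl)
  obtain ⟨_, ⟨_, ⟨_, rfl, ω, hω, rfl⟩, _, rfl, rfl⟩, δ', hδ', hmul⟩ := hmem
  exact ⟨ω, hω, δ', hδ', hmul.symm⟩

/-- If `Γ` is protonormal in `G` (i.e. `Γs⁻¹Γs = s⁻¹ΓsΓ` for all `s`),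
then for all `g ∈ G` and `γ₁, γ₂ ∈ Γ` there is `ω ∈ Γ` with
`Γ[g,γ₁,γ₂]Γ = Γ(g⁻¹ωγ₁⁻¹g)Γ`. -/
theorem stmt_16 {G : Type*} [Group G] (Γ : Subgroup G)
    (hproto : ∀ s : G,
      (Γ : Set G) * ({s⁻¹} * (Γ : Set G) * {s}) =
        ({s⁻¹} * (Γ : Set G) * {s}) * (Γ : Set G))
    (g γ₁ γ₂ : G) (h1 : γ₁ ∈ Γ) (h2 : γ₂ ∈ Γ) :
    ∃ ω ∈ Γ,
      (Γ : Set G) * {pcomm (pcomm g γ₁) γ₂} * (Γ : Set G) =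
        (Γ : Set G) * {g⁻¹ * ω * γ₁⁻¹ * g} * (Γ : Set G) := by
  obtain ⟨ω, hω, δ, hδ, hswap⟩ :=
    Γ.exists_mul_conj_eq_conj_mul (hproto g) (Γ.inv_mem h2) (Γ.inv_mem h1)
  refine ⟨γ₁ * ω * γ₁, Γ.mul_mem (Γ.mul_mem h1 hω) h1, ?_⟩
  have hexpand : pcomm (pcomm g γ₁) γ₂ =
      γ₁⁻¹ * (g⁻¹ * (γ₁ * ω * γ₁) * γ₁⁻¹ * g) * (δ * (γ₁ * γ₂)) :=
    calc pcomm (pcomm g γ₁) γ₂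
        = γ₁⁻¹ * (g⁻¹ * γ₁ * g) * (γ₂⁻¹ * (g⁻¹ * γ₁⁻¹ * g)) * (γ₁ * γ₂) := by
          simp only [pcomm]; group
      _ = γ₁⁻¹ * (g⁻¹ * γ₁ * g) * (g⁻¹ * ω * g * δ) * (γ₁ * γ₂) := by rw [hswap]
      _ = γ₁⁻¹ * (g⁻¹ * (γ₁ * ω * γ₁) * γ₁⁻¹ * g) * (δ * (γ₁ * γ₂)) := by group
  rw [hexpand, Γ.doubleCoset_mul_mul _ (Γ.inv_mem h1) (Γ.mul_mem hδ (Γ.mul_mem h1 h2))]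
end
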